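/- Let n ≥ 4, let s be an integer with 0 ≤ s ≤ n-1, and let a_1, a_2 > 0 be reals with a_1 ≠ a_2 such that F4(a_1,s) = F4(a_2,s) = F81(a_1,s) = F81(a_2,s) = F82(a_1,s) = F82(a_2,s) = 0. Then n = 6s - 3. -/

import Mathlib

/-- `F4(a,s) = a^4 + s - 6a^2 s/(n-1) - 3s(s-1)/(n-1)`. -/
noncomputable def F4 (n : ℕ) (a : ℝ) (s : ℕ) : ℝ :=
  a ^ 4 + s - 6 * a ^ 2 * s / ((n : ℝ) - 1) - 3 * s * ((s : ℝ) - 1) / ((n : ℝ) - 1)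

/-- `F81(a,s) = a^8 + s - 28(a^6+a^2+s-1)s/(n-1) + 70(a^4+(s-1)/2)s/(n-1)`. -/
noncomputable def F81 (n : ℕ) (a : ℝ) (s : ℕ) : ℝ :=
  a ^ 8 + s - 28 * (a ^ 6 + a ^ 2 + (s : ℝ) - 1) * s / ((n : ℝ) - 1)
    + 70 * (a ^ 4 + ((s : ℝ) - 1) / 2) * s / ((n : ℝ) - 1)

/-- `F82(a,s) = a^4 + (s-1)/2 - 3(a^4+2a^2+s-2)(s-1)/(n-2)
  + (9/2)(4a^2+s-3)(s-1)(s-2)/((n-2)(n-3))`. -/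
noncomputable def F82 (n : ℕ) (a : ℝ) (s : ℕ) : ℝ :=
  a ^ 4 + ((s : ℝ) - 1) / 2
    - 3 * (a ^ 4 + 2 * a ^ 2 + (s : ℝ) - 2) * ((s : ℝ) - 1) / ((n : ℝ) - 2)
    + (9 / 2) * (4 * a ^ 2 + (s : ℝ) - 3) * ((s : ℝ) - 1) * ((s : ℝ) - 2)
        / (((n : ℝ) - 2) * ((n : ℝ) - 3))

/-!
Eliminating `a⁴` between `F4(a,s) = 0` and `F82(a,s) = 0` leaves an equation that is affine in
`a²`, with leading coefficient `12 (n - 6s + 3)(n - s - 1)`. Two distinct positive roots have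
distinct squares, so this coefficient and the constant term both vanish. At `s = n - 1` the
constant term is `-4 n (n-1)(n-2)(n-3) ≠ 0`, which leaves `n = 6s - 3`.
-/

lemma sub_one_mul_F4 {n : ℕ} (hn : n ≠ 1) (a : ℝ) (s : ℕ) :
    ((n : ℝ) - 1) * F4 n a s =
      ((n : ℝ) - 1) * (a ^ 4 + s) - 6 * a ^ 2 * s - 3 * s * ((s : ℝ) - 1) := by
  have : (n : ℝ) - 1 ≠ 0 := sub_ne_zero.mpr (mod_cast hn)
  unfold F4
  field_simp

lemma sub_two_mul_sub_three_mul_F82 {n : ℕ} (hn₂ : n ≠ 2) (hn₃ : n ≠ 3) (a : ℝ) (s : ℕ) :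
    2 * ((n : ℝ) - 2) * ((n : ℝ) - 3) * F82 n a s =
      ((n : ℝ) - 2) * ((n : ℝ) - 3) * (2 * a ^ 4 + s - 1)
        - 6 * ((n : ℝ) - 3) * (a ^ 4 + 2 * a ^ 2 + s - 2) * ((s : ℝ) - 1)
        + 9 * (4 * a ^ 2 + s - 3) * ((s : ℝ) - 1) * ((s : ℝ) - 2) := by
  have : (n : ℝ) - 2 ≠ 0 := sub_ne_zero.mpr (mod_cast hn₂)
  have : (n : ℝ) - 3 ≠ 0 := sub_ne_zero.mpr (mod_cast hn₃)
  unfold F82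
  field_simp
  ring

def eliminantConst (N S : ℝ) : ℝ :=
  24 - 39 * S - 18 * S ^ 2 + 45 * S ^ 3 - 17 * N + 52 * N * S - 48 * N * S ^ 2 - 9 * N * S ^ 3
    - 6 * N ^ 2 + 12 * N ^ 2 * S + 6 * N ^ 2 * S ^ 2 - N ^ 3 - N ^ 3 * S

lemma eliminantConst_sub_one (N : ℝ) :
    eliminantConst N (N - 1) = -4 * N * (N - 1) * (N - 2) * (N - 3) := by
  unfold eliminantConst
  ring

lemma eliminant_eq_zero_of_F4_of_F82 {n : ℕ} (hn₁ : n ≠ 1) (hn₂ : n ≠ 2) (hn₃ : n ≠ 3)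
    {a : ℝ} {s : ℕ} (h4 : F4 n a s = 0) (h82 : F82 n a s = 0) :
    12 * (((n : ℝ) - 6 * s + 3) * ((n : ℝ) - s - 1)) * a ^ 2 + eliminantConst n s = 0 := by
  have e4 := sub_one_mul_F4 hn₁ a s
  have e82 := sub_two_mul_sub_three_mul_F82 hn₂ hn₃ a s
  rw [h4, mul_zero] at e4
  rw [h82, mul_zero] at e82
  unfold eliminantConst
  linear_combination (1 - (n : ℝ)) * e82 + 2 * ((n : ℝ) - 3) * ((n : ℝ) - 3 * s + 1) * e4

lemma eq_zero_and_eq_zero_of_affine {K : Type*} [Field K] {c d x y : K}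
    (hx : c * x + d = 0) (hy : c * y + d = 0) (hxy : x ≠ y) : c = 0 ∧ d = 0 := by
  have hc : c = 0 :=
    (mul_eq_zero.mp (by linear_combination hx - hy : c * (x - y) = 0)).resolve_right
      (sub_ne_zero.mpr hxy)
  exact ⟨hc, by simpa [hc] using hx⟩

theorem n_eq_six_s_sub_three_general (n : ℕ) (hn : 4 ≤ n) (s : ℕ)
    (a₁ a₂ : ℝ) (ha₁ : 0 < a₁) (ha₂ : 0 < a₂) (hne : a₁ ≠ a₂)
    (h4₁ : F4 n a₁ s = 0) (h4₂ : F4 n a₂ s = 0)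
    (h82₁ : F82 n a₁ s = 0) (h82₂ : F82 n a₂ s = 0) :
    (n : ℤ) = 6 * s - 3 := by
  have hsq : a₁ ^ 2 ≠ a₂ ^ 2 := (sq_eq_sq₀ ha₁.le ha₂.le).not.mpr hne
  obtain ⟨hcoef, hconst⟩ := eq_zero_and_eq_zero_of_affine
    (eliminant_eq_zero_of_F4_of_F82 (by omega) (by omega) (by omega) h4₁ h82₁)
    (eliminant_eq_zero_of_F4_of_F82 (by omega) (by omega) (by omega) h4₂ h82₂) hsq
  rcases mul_eq_zero.mp ((mul_eq_zero.mp hcoef).resolve_left (by norm_num)) with h | h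
  · exact_mod_cast (by push_cast; linarith : ((n : ℤ) : ℝ) = ((6 * s - 3 : ℤ) : ℝ))
  · have hN : (4 : ℝ) ≤ n := mod_cast hn
    rw [show (s : ℝ) = n - 1 by linarith, eliminantConst_sub_one] at hconst
    have : (0 : ℝ) < n * (n - 1) * (n - 2) * (n - 3) := by
      have : (0 : ℝ) < n - 3 := by linarith
      have : (0 : ℝ) < n - 2 := by linarith
      have : (0 : ℝ) < n - 1 := by linarith
      positivity
    linarith

/-- Common zeros of `F4, F81, F82` with equal `s` and distinct `a` force `n = 6s-3`. -/
theorem n_eq_six_s_sub_three (n : ℕ) (hn : 4 ≤ n) (s : ℕ) (hs : s ≤ n - 1)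
    (a₁ a₂ : ℝ) (ha₁ : 0 < a₁) (ha₂ : 0 < a₂) (hne : a₁ ≠ a₂)
    (h4₁ : F4 n a₁ s = 0) (h4₂ : F4 n a₂ s = 0)
    (h81₁ : F81 n a₁ s = 0) (h81₂ : F81 n a₂ s = 0)
    (h82₁ : F82 n a₁ s = 0) (h82₂ : F82 n a₂ s = 0) :
    (n : ℤ) = 6 * s - 3 :=
  n_eq_six_s_sub_three_general n hn s a₁ a₂ ha₁ ha₂ hne h4₁ h4₂ h82₁ h82₂
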